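/- For integers e1 < 0 and e2 < 0, the bitwise OR r = e1 | e2 satisfies r ≥ e1, r ≥ e2, and r < 0. -/
import Mathlib


theorem stmt_14 (e1 e2 r : ℤ) (h1 : e1 < 0) (h2 : e2 < 0) (hr : r = Int.lor e1 e2) :
    e1 ≤ r ∧ e2 ≤ r ∧ r < 0 := by
  obtain ⟨m, rfl⟩ := Int.eq_negSucc_of_lt_zero h1
  obtain ⟨n, rfl⟩ := Int.eq_negSucc_of_lt_zero h2
  subst hr
  simp only [Int.lor, Int.negSucc_eq]
  refine ⟨?_, ?_, by omega⟩ <;>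
    [have := Nat.and_le_left (n := m) (m := n); have := Nat.and_le_right (n := m) (m := n)] <;>
    omega
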